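/- With X, {e_k; f_k}, Q_n, Φ_r as above: if x ∈ X and N ∈ ℕ satisfy ‖Q_N x‖ ≤ r, then Q_n Φ_r(x) = Q_n x for all n ≥ N. -/

import Mathlib

open Filter Finset Topology

/-- The tail projection `Q_{n+1} = I - P_n` associated to a Schauder basis system,
where `P_n x = ∑_{k<n} f_k(x) e_k`.  Thus `tailProj f e n` is the paper's `Q_{n+1}`
and also its `R_n`. -/
noncomputable def tailProj {X : Type*} [NormedAddCommGroup X] [NormedSpace ℝ X]
    (f : ℕ → X →L[ℝ] ℝ) (e : ℕ → X) (n : ℕ) : X →L[ℝ] X :=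
  ContinuousLinearMap.id ℝ X - ∑ k ∈ Finset.range n, (f k).smulRight (e k)

/-- The piecewise-linear cutoff function `φ_r`: equal to `1` on `[-r, r]`,
`0` outside `(-2r, 2r)`, and `2 - |t|/r` in between. -/
noncomputable def phi (r t : ℝ) : ℝ :=
  if |t| ≤ r then 1 else if |t| ≤ 2 * r then 2 - |t| / r else 0

/-! The cutoff `Φ_r x` only rescales the finitely many coordinates `k < N` of `x`, because
`‖Q_k x‖ ≤ ‖Q_N x‖ ≤ r` forces `φ_r(‖Q_k x‖) = 1` for `k ≥ N`.  Hence `Φ_r x - x` lies in the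
span of `e_0, …, e_{N-1}`, which every `Q_n` with `n ≥ N` annihilates by biorthogonality. -/

theorem phi_of_abs_le {r t : ℝ} (h : |t| ≤ r) : phi r t = 1 := if_pos h

theorem sum_range_smul_eq_add_of_eq_one {M : Type*} [AddCommGroup M] [Module ℝ M]
    (a : ℕ → ℝ) (v : ℕ → M) {N m : ℕ} (hNm : N ≤ m) (ha : ∀ k, N ≤ k → a k = 1) :
    ∑ k ∈ range m, a k • v k = ∑ k ∈ range m, v k + ∑ k ∈ range N, (a k - 1) • v k := by
  have htail : ∑ k ∈ range N, (a k - 1) • v k = ∑ k ∈ range m, (a k - 1) • v k :=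
    sum_subset (range_subset_range.mpr hNm) fun k _ hk => by
      rw [ha k (not_lt.mp (mem_range.not.mp hk)), sub_self, zero_smul]
  rw [htail, ← sum_add_distrib]
  exact sum_congr rfl fun k _ => by rw [sub_smul, one_smul, add_sub_cancel]

section tailProj

variable {X : Type*} [NormedAddCommGroup X] [NormedSpace ℝ X] {e : ℕ → X} {f : ℕ → X →L[ℝ] ℝ}

theorem tailProj_apply (n : ℕ) (x : X) :
    tailProj f e n x = x - ∑ k ∈ range n, f k x • e k := by
  simp [tailProj]

theorem tailProj_sum_range_smul_eq_zero (hbi : ∀ k j, f k (e j) = if k = j then (1 : ℝ) else 0)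
    (c : ℕ → ℝ) {m n : ℕ} (hmn : m ≤ n) : tailProj f e n (∑ k ∈ range m, c k • e k) = 0 := by
  have hbasis : ∀ k < n, tailProj f e n (e k) = 0 := fun k hk => by
    simp [tailProj_apply, hbi, ite_smul, mem_range.mpr hk]
  rw [map_sum]
  exact sum_eq_zero fun k hk => by
    rw [map_smul, hbasis k ((mem_range.mp hk).trans_le hmn), smul_zero]

theorem tailProj_tailProj_of_le (hbi : ∀ k j, f k (e j) = if k = j then (1 : ℝ) else 0)
    {m n : ℕ} (hmn : m ≤ n) (x : X) : tailProj f e n (tailProj f e m x) = tailProj f e n x := by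
  rw [tailProj_apply m x, map_sub, tailProj_sum_range_smul_eq_zero hbi _ hmn, sub_zero]

theorem norm_tailProj_le_of_le (hbi : ∀ k j, f k (e j) = if k = j then (1 : ℝ) else 0)
    (hR : ∀ n, 1 ≤ n → ‖tailProj f e n‖ = 1) {m n : ℕ} (hmn : m ≤ n) (x : X) :
    ‖tailProj f e n x‖ ≤ ‖tailProj f e m x‖ := by
  rcases Nat.eq_zero_or_pos n with rfl | hn
  · rw [Nat.le_zero.mp hmn]
  · calc ‖tailProj f e n x‖ = ‖tailProj f e n (tailProj f e m x)‖ := by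
          rw [tailProj_tailProj_of_le hbi hmn]
      _ ≤ ‖tailProj f e n‖ * ‖tailProj f e m x‖ := (tailProj f e n).le_opNorm _
      _ = ‖tailProj f e m x‖ := by rw [hR n hn, one_mul]

end tailProj

theorem Phi_tail_identity_general
    {X : Type*} [NormedAddCommGroup X] [NormedSpace ℝ X]
    (e : ℕ → X) (f : ℕ → X →L[ℝ] ℝ)
    (hexp : ∀ x : X, Tendsto (fun n => ∑ k ∈ Finset.range n, f k x • e k) atTop (𝓝 x))
    (hbi : ∀ k j, f k (e j) = if k = j then (1 : ℝ) else 0)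
    (hR : ∀ n, 1 ≤ n → ‖tailProj f e n‖ = 1)
    (r : ℝ) (Φ : X → X)
    (hΦ : ∀ x : X, Tendsto
      (fun n => ∑ k ∈ Finset.range n, phi r ‖tailProj f e k x‖ • (f k x • e k))
      atTop (𝓝 (Φ x)))
    (x : X) (N : ℕ) (hx : ‖tailProj f e N x‖ ≤ r) :
    ∀ n, N ≤ n → tailProj f e n (Φ x) = tailProj f e n x := by
  intro n hn
  set a : ℕ → ℝ := fun k => phi r ‖tailProj f e k x‖
  have ha : ∀ k, N ≤ k → a k = 1 := fun k hk =>
    phi_of_abs_le <| (abs_norm _).trans_le ((norm_tailProj_le_of_le hbi hR hk x).trans hx)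
  have hΦx : Φ x = x + ∑ k ∈ range N, ((a k - 1) * f k x) • e k := by
    refine tendsto_nhds_unique (hΦ x) (((hexp x).add_const _).congr' ?_)
    filter_upwards [eventually_ge_atTop N] with m hm
    simp only [← smul_smul]
    exact (sum_range_smul_eq_add_of_eq_one a _ hm ha).symm
  rw [hΦx, map_add, tailProj_sum_range_smul_eq_zero hbi _ hn, add_zero]

/-- If `‖Q_N x‖ ≤ r` then `Q_n Φ_r(x) = Q_n x` for all `n ≥ N`. -/
theorem Phi_tail_identity
    {X : Type*} [NormedAddCommGroup X] [NormedSpace ℝ X] [CompleteSpace X]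
    (e : ℕ → X) (f : ℕ → X →L[ℝ] ℝ)
    (hexp : ∀ x : X, Tendsto (fun n => ∑ k ∈ Finset.range n, f k x • e k) atTop (𝓝 x))
    (hbi : ∀ k j, f k (e j) = if k = j then (1 : ℝ) else 0)
    (hR : ∀ n, 1 ≤ n → ‖tailProj f e n‖ = 1)
    (r : ℝ) (hr : 0 < r) (Φ : X → X)
    (hΦ : ∀ x : X, Tendsto
      (fun n => ∑ k ∈ Finset.range n, phi r ‖tailProj f e k x‖ • (f k x • e k))
      atTop (𝓝 (Φ x)))
    (x : X) (N : ℕ) (hx : ‖tailProj f e N x‖ ≤ r) :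
    ∀ n, N ≤ n → tailProj f e n (Φ x) = tailProj f e n x :=
  Phi_tail_identity_general e f hexp hbi hR r Φ hΦ x N hx
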